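/- arXiv:2206.15008 — 3 statements merged into one kernel-verified Lean document; each statement's English description precedes it below -/
import Mathlib

section
/- Let Ω > 0 and K ≥ 0, let F : [0,∞) → ℝ be measurable with |F(s)| ≤ K⟨s⟩^{−2} for all s ≥ 0, let a₀ ∈ ℝ, and define a(t) = e^{−Ωt} [ a₀ + (1/(2Ω)) ∫₀^∞ e^{−Ωs} F(s) ds ] − (1/(2Ω)) ∫₀^∞ e^{−Ω|t−s|} F(s) ds for t ≥ 0. Then there exists a constant C depending only on Ω such that ⟨t⟩² |a(t)| ≤ C (|a₀| + K) for all t ≥ 0. -/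
/-!
Peetre's inequality `1 + t² ≤ 2 (1 + (t - s)²)(1 + s²)` moves the weight `⟨s⟩⁻²` of the source
to `⟨t⟩⁻²` at the price of a factor `⟨t - s⟩²`, which the exponential kernel absorbs with room to
spare: `⟨u⟩⁴ e^{-Ω|u|}` is bounded. Hence `⟨t⟩² |∫₀^∞ e^{-Ω|t-s|} F(s) ds| ≲ K ∫ ⟨t - s⟩⁻² ds = π K`.
The first integral in `a(t)` is this convolution at `t = 0`, and `⟨t⟩² e^{-Ωt}` is bounded.
-/

open MeasureTheory Set Real

lemma one_add_sq_le_two_mul_one_add_sq_sub_mul_one_add_sq (t s : ℝ) :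
    1 + t ^ 2 ≤ 2 * (1 + (t - s) ^ 2) * (1 + s ^ 2) := by
  nlinarith [sq_nonneg (t - 2 * s), sq_nonneg (s * (t - s))]

lemma one_add_sq_mul_exp_neg_mul_abs_le {c : ℝ} (hc : 0 < c) (u : ℝ) :
    (1 + u ^ 2) * exp (-c * |u|) ≤ 1 + 2 / c ^ 2 := by
  have hexp : (c * |u|) ^ 2 / 2 ≤ exp (c * |u|) := by
    simpa using pow_div_factorial_le_exp (c * |u|) (by positivity) 2
  have hsq : u ^ 2 * exp (-c * |u|) ≤ 2 / c ^ 2 := by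
    rw [neg_mul, exp_neg, ← div_eq_mul_inv, div_le_div_iff₀ (exp_pos _) (by positivity),
      ← sq_abs u]
    nlinarith
  have hle : exp (-c * |u|) ≤ 1 := exp_le_one_iff.2 (by nlinarith [abs_nonneg u])
  nlinarith

lemma one_add_sq_sq_mul_exp_neg_mul_abs_le {c : ℝ} (hc : 0 < c) (u : ℝ) :
    (1 + u ^ 2) ^ 2 * exp (-c * |u|) ≤ (1 + 8 / c ^ 2) ^ 2 := by
  have h := one_add_sq_mul_exp_neg_mul_abs_le (half_pos hc) u
  have hsplit : exp (-c * |u|) = exp (-(c / 2) * |u|) ^ 2 := by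
    rw [← exp_nat_mul]; ring_nf
  calc (1 + u ^ 2) ^ 2 * exp (-c * |u|) = ((1 + u ^ 2) * exp (-(c / 2) * |u|)) ^ 2 := by
        rw [hsplit]; ring
    _ ≤ (1 + 2 / (c / 2) ^ 2) ^ 2 := by gcongr
    _ = (1 + 8 / c ^ 2) ^ 2 := by ring

lemma exp_neg_mul_abs_sub_div_le {c : ℝ} (hc : 0 < c) (t s : ℝ) :
    exp (-c * |t - s|) / (1 + s ^ 2)
      ≤ 2 * (1 + 8 / c ^ 2) ^ 2 / (1 + t ^ 2) * (1 + (t - s) ^ 2)⁻¹ := by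
  have hpeetre := one_add_sq_le_two_mul_one_add_sq_sub_mul_one_add_sq t s
  have hdecay := one_add_sq_sq_mul_exp_neg_mul_abs_le hc (t - s)
  rw [div_mul_eq_mul_div, ← div_eq_mul_inv, div_div,
    div_le_div_iff₀ (by positivity) (by positivity)]
  calc exp (-c * |t - s|) * ((1 + (t - s) ^ 2) * (1 + t ^ 2))
      ≤ exp (-c * |t - s|) * ((1 + (t - s) ^ 2) * (2 * (1 + (t - s) ^ 2) * (1 + s ^ 2))) := by
        gcongr
    _ = 2 * ((1 + (t - s) ^ 2) ^ 2 * exp (-c * |t - s|)) * (1 + s ^ 2) := by ring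
    _ ≤ 2 * (1 + 8 / c ^ 2) ^ 2 * (1 + s ^ 2) := by gcongr

lemma one_add_sq_mul_abs_integral_exp_neg_mul_abs_sub_mul_le {c K : ℝ} (hc : 0 < c) {F : ℝ → ℝ}
    (hF : ∀ s, 0 ≤ s → |F s| ≤ K / (1 + s ^ 2)) (t : ℝ) :
    (1 + t ^ 2) * |∫ s in Ioi 0, exp (-c * |t - s|) * F s|
      ≤ 2 * π * (1 + 8 / c ^ 2) ^ 2 * K := by
  set A := 2 * (1 + 8 / c ^ 2) ^ 2 / (1 + t ^ 2)
  have hK : 0 ≤ K := (abs_nonneg _).trans ((hF 0 le_rfl).trans (by norm_num))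
  have hint : Integrable (fun s => A * K * (1 + (t - s) ^ 2)⁻¹) :=
    (integrable_inv_one_add_sq.comp_sub_left t).const_mul _
  have hpointwise : ∀ᵐ s ∂volume.restrict (Ioi 0),
      ‖exp (-c * |t - s|) * F s‖ ≤ A * K * (1 + (t - s) ^ 2)⁻¹ := by
    filter_upwards [self_mem_ae_restrict measurableSet_Ioi] with s hs
    calc ‖exp (-c * |t - s|) * F s‖ = exp (-c * |t - s|) * |F s| := by
          rw [norm_mul, norm_of_nonneg (exp_pos _).le, norm_eq_abs]
      _ ≤ exp (-c * |t - s|) * (K / (1 + s ^ 2)) := by gcongr; exact hF s hs.le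
      _ = K * (exp (-c * |t - s|) / (1 + s ^ 2)) := by ring
      _ ≤ K * (A * (1 + (t - s) ^ 2)⁻¹) := by gcongr; exact exp_neg_mul_abs_sub_div_le hc t s
      _ = A * K * (1 + (t - s) ^ 2)⁻¹ := by ring
  have hconv : ∫ s, A * K * (1 + (t - s) ^ 2)⁻¹ = A * K * π := by
    rw [integral_const_mul, integral_sub_left_eq_self (fun x => (1 + x ^ 2)⁻¹),
      integral_univ_inv_one_add_sq]
  have hbound : |∫ s in Ioi 0, exp (-c * |t - s|) * F s| ≤ A * K * π :=
    calc _ ≤ ∫ s in Ioi 0, A * K * (1 + (t - s) ^ 2)⁻¹ :=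
          norm_integral_le_of_norm_le hint.integrableOn hpointwise
      _ ≤ ∫ s, A * K * (1 + (t - s) ^ 2)⁻¹ :=
          setIntegral_le_integral hint (ae_of_all _ fun s => by positivity)
      _ = A * K * π := hconv
  calc (1 + t ^ 2) * |∫ s in Ioi 0, exp (-c * |t - s|) * F s|
      ≤ (1 + t ^ 2) * (A * K * π) := by gcongr
    _ = 2 * π * (1 + 8 / c ^ 2) ^ 2 * K := by simp only [A]; field_simp

lemma mul_abs_mul_add_mul_sub_mul_le {w e a I J B L κ : ℝ} (hw : 0 ≤ w) (he : 0 ≤ e)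
    (hκ : 0 ≤ κ) (hwe : w * e ≤ B) (hI : |I| ≤ L) (hJ : w * |J| ≤ L) :
    w * |e * (a + κ * I) - κ * J| ≤ B * (|a| + κ * L) + κ * L := by
  have htri : |e * (a + κ * I) - κ * J| ≤ e * (|a| + κ * |I|) + κ * |J| := by
    calc _ ≤ |e * (a + κ * I)| + |κ * J| := abs_sub _ _
      _ ≤ e * (|a| + κ * |I|) + κ * |J| := by
        rw [abs_mul, abs_mul, abs_of_nonneg he, abs_of_nonneg hκ]
        gcongr
        exact (abs_add_le _ _).trans_eq (by rw [abs_mul, abs_of_nonneg hκ])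
  have hB : 0 ≤ B := (mul_nonneg hw he).trans hwe
  calc w * |e * (a + κ * I) - κ * J|
      ≤ (w * e) * (|a| + κ * |I|) + κ * (w * |J|) := by
        nlinarith [mul_le_mul_of_nonneg_left htri hw]
    _ ≤ B * (|a| + κ * L) + κ * L := by gcongr

/-- Quantitative `⟨t⟩⁻²` decay of the discrete mode: there is a constant `C`
depending only on `Ω` such that if `|F(s)| ≤ K ⟨s⟩⁻²` for `s ≥ 0` and
`a(t) = e^{−Ωt} [a₀ + (1/(2Ω)) ∫₀^∞ e^{−Ωs} F(s) ds]
        − (1/(2Ω)) ∫₀^∞ e^{−Ω|t−s|} F(s) ds`,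
then `⟨t⟩² |a(t)| ≤ C (|a₀| + K)` for all `t ≥ 0`. Here `⟨t⟩² = 1 + t²`. -/
theorem stmt5 (Ω : ℝ) (hΩ : 0 < Ω) :
    ∃ C : ℝ, ∀ K : ℝ, 0 ≤ K → ∀ F : ℝ → ℝ, Measurable F →
      (∀ s : ℝ, 0 ≤ s → |F s| ≤ K / (1 + s ^ 2)) →
      ∀ a₀ : ℝ, ∀ t : ℝ, 0 ≤ t →
        (1 + t ^ 2) *
          |Real.exp (-Ω * t) *
              (a₀ + (1 / (2 * Ω)) * ∫ s in Set.Ioi (0 : ℝ), Real.exp (-Ω * s) * F s)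
            - (1 / (2 * Ω)) * ∫ s in Set.Ioi (0 : ℝ), Real.exp (-Ω * |t - s|) * F s|
          ≤ C * (|a₀| + K) := by
  set B := 1 + 2 / Ω ^ 2
  set L := 2 * π * (1 + 8 / Ω ^ 2) ^ 2
  refine ⟨B + (B + 1) * (1 / (2 * Ω)) * L, fun K hK F _ hF a₀ t ht => ?_⟩
  have hweight : (1 + t ^ 2) * exp (-Ω * t) ≤ B := by
    simpa [abs_of_nonneg ht] using one_add_sq_mul_exp_neg_mul_abs_le hΩ t
  have hconv := one_add_sq_mul_abs_integral_exp_neg_mul_abs_sub_mul_le hΩ hF t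
  have hconv₀ : |∫ s in Ioi 0, exp (-Ω * s) * F s| ≤ L * K := by
    have h := one_add_sq_mul_abs_integral_exp_neg_mul_abs_sub_mul_le hΩ hF 0
    simp only [zero_sub, abs_neg] at h
    rw [setIntegral_congr_fun measurableSet_Ioi fun s hs => by rw [abs_of_pos hs]] at h
    simpa using h
  have hB : 0 ≤ B := by positivity
  have hκL : 0 ≤ (B + 1) * (1 / (2 * Ω)) * L := by positivity
  calc _ ≤ B * (|a₀| + 1 / (2 * Ω) * (L * K)) + 1 / (2 * Ω) * (L * K) :=
        mul_abs_mul_add_mul_sub_mul_le (by positivity) (exp_pos _).le (by positivity) hweight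
          hconv₀ hconv
    _ ≤ (B + (B + 1) * (1 / (2 * Ω)) * L) * (|a₀| + K) := by
        nlinarith [mul_nonneg hB hK, mul_nonneg hκL (abs_nonneg a₀)]
end

section
/- Let γ > 0 and C_V ≥ 0, and let V : ℝ → ℝ be continuous with |V(x)| ≤ C_V e^{−γ|x|} for all x ∈ ℝ. Suppose m : ℝ × (ℝ∖{0}) → ℂ is bounded and satisfies, for every x ∈ ℝ and every k ≠ 0, the Volterra integral equation m(x,k) = 1 + ∫_x^∞ D_k(y−x) V(y) m(y,k) dy, where D_k(y) = (e^{2iky} − 1)/(2ik). Then there exists C ≥ 0 such that |m(x,k) − 1| ≤ C ⟨x⟩^{−12} ⟨k⟩^{−1} for all x ≥ −1 and k ≠ 0, and |m(x,k) − 1| ≤ C ⟨x⟩ ⟨k⟩^{−1} for all x ≤ 1 and k ≠ 0. -/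
/-!
Since `|e^{is} - 1| ≤ min(2, |s|)`, the kernel satisfies `|D_k(t)| ≤ min(|k|⁻¹, |t|) ≤ (1 + |t|)/⟨k⟩`.
Plugging the bounds on `m` and `V` into the Volterra equation gives
`|m(x,k) - 1| ≤ C_V M ⟨k⟩⁻¹ ∫_x^∞ (1 + |y - x|) e^{-γ|y|} dy`. Absorbing the linear factor into
half of the exponential, this integral is `O(e^{-γx})` and also `O(1 + |x|)`; on `x ≥ -1` the
exponential beats `⟨x⟩⁻¹²`.
-/

open MeasureTheory Set Real

noncomputable def volterraKernel (k t : ℝ) : ℂ :=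
  (Complex.exp (2 * Complex.I * k * t) - 1) / (2 * Complex.I * k)

lemma norm_volterraKernel (k t : ℝ) :
    ‖volterraKernel k t‖ = ‖Complex.exp (Complex.I * ↑(2 * k * t)) - 1‖ / (2 * |k|) := by
  rw [volterraKernel, norm_div]
  congr 2
  · push_cast; ring_nf
  · simp

lemma norm_volterraKernel_le_inv_abs (k t : ℝ) : ‖volterraKernel k t‖ ≤ |k|⁻¹ := by
  have h : ‖Complex.exp (Complex.I * ↑(2 * k * t)) - 1‖ ≤ 2 :=
    (norm_sub_le _ _).trans (by rw [Complex.norm_exp_I_mul_ofReal, norm_one]; norm_num)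
  calc ‖volterraKernel k t‖ ≤ 2 / (2 * |k|) := by
        rw [norm_volterraKernel]; gcongr
    _ = |k|⁻¹ := by rw [div_mul_eq_div_div, div_self two_ne_zero, one_div]

lemma norm_volterraKernel_le_abs (k t : ℝ) : ‖volterraKernel k t‖ ≤ |t| := by
  rcases eq_or_ne k 0 with rfl | hk
  · simp [volterraKernel]
  rw [norm_volterraKernel, div_le_iff₀ (by positivity)]
  calc _ ≤ ‖2 * k * t‖ := Real.norm_exp_I_mul_ofReal_sub_one_le
    _ = |t| * (2 * |k|) := by rw [Real.norm_eq_abs, abs_mul, abs_mul, abs_two]; ring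

lemma sqrt_one_add_sq_le_one_add_abs (x : ℝ) : √(1 + x ^ 2) ≤ 1 + |x| :=
  Real.sqrt_le_iff.mpr ⟨by positivity, by nlinarith [sq_abs x, abs_nonneg x]⟩

lemma one_add_abs_le_two_mul_sqrt_one_add_sq (x : ℝ) : 1 + |x| ≤ 2 * √(1 + x ^ 2) := by
  rw [← div_le_iff₀' two_pos]
  exact Real.le_sqrt_of_sq_le (by nlinarith [sq_abs x, abs_nonneg x])

-- interpolates the two bounds above through `⟨k⟩ ≤ 1 + |k|`
lemma norm_volterraKernel_le (k t : ℝ) :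
    ‖volterraKernel k t‖ ≤ (1 + |t|) / √(1 + k ^ 2) := by
  rw [le_div_iff₀ (by positivity)]
  have hk : ‖volterraKernel k t‖ * |k| ≤ 1 := by
    rcases eq_or_ne k 0 with rfl | hk
    · simp
    · calc _ ≤ |k|⁻¹ * |k| := by gcongr; exact norm_volterraKernel_le_inv_abs k t
        _ = 1 := inv_mul_cancel₀ (abs_ne_zero.mpr hk)
  calc _ ≤ ‖volterraKernel k t‖ * (1 + |k|) := by
        gcongr; exact sqrt_one_add_sq_le_one_add_abs k
    _ ≤ 1 + |t| := by linarith [norm_volterraKernel_le_abs k t]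

lemma one_add_le_mul_exp {c t : ℝ} (hc : 0 < c) (ht : 0 ≤ t) :
    1 + t ≤ (1 + c⁻¹) * exp (c * t) := by
  have h1 : 1 ≤ exp (c * t) := one_le_exp (by positivity)
  have h2 : c * t + 1 ≤ exp (c * t) := add_one_le_exp _
  have h3 : t ≤ c⁻¹ * exp (c * t) := by
    rw [← div_eq_inv_mul, le_div_iff₀ hc]; linarith
  linarith

lemma integrable_exp_neg_mul_abs {c : ℝ} (hc : 0 < c) :
    Integrable fun y : ℝ => exp (-c * |y|) := by
  rw [← integrableOn_univ, ← Iic_union_Ioi (a := 0), integrableOn_union]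
  constructor
  · refine (integrableOn_exp_mul_Iic hc 0).congr_fun (fun y hy => ?_) measurableSet_Iic
    rw [abs_of_nonpos hy, neg_mul_neg]
  · exact (exp_neg_integrableOn_Ioi 0 hc).congr_fun
      (fun y hy => by rw [abs_of_pos hy]) measurableSet_Ioi

lemma integral_exp_neg_mul_abs {c : ℝ} (hc : 0 < c) :
    ∫ y : ℝ, exp (-c * |y|) = 2 / c := by
  rw [integral_comp_abs (f := fun y => exp (-c * y)), integral_exp_mul_Ioi (by linarith),
    mul_zero, exp_zero, neg_div_neg_eq, mul_one_div]

lemma integral_exp_neg_mul_Ioi {c : ℝ} (hc : 0 < c) (x : ℝ) :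
    ∫ y in Ioi x, exp (-c * y) = exp (-c * x) / c := by
  rw [integral_exp_mul_Ioi (by linarith), neg_div_neg_eq]

lemma exp_neg_mul_le_mul_sqrt_one_add_sq_rpow {γ : ℝ} (hγ : 0 < γ) {n : ℕ} (hn : n ≠ 0) {x : ℝ}
    (hx : -1 ≤ x) :
    exp (-γ * x) ≤ exp (2 * γ) * (1 + n / γ) ^ n * √(1 + x ^ 2) ^ (-(n : ℝ)) := by
  have hlin : 1 + |x| ≤ (1 + n / γ) * exp (γ / n * |x|) := by
    simpa only [inv_div] using one_add_le_mul_exp (c := γ / n) (by positivity) (abs_nonneg x)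
  have hpow : √(1 + x ^ 2) ^ n ≤ (1 + n / γ) ^ n * exp (γ * |x|) :=
    calc √(1 + x ^ 2) ^ n ≤ (1 + |x|) ^ n := by gcongr; exact sqrt_one_add_sq_le_one_add_abs x
      _ ≤ ((1 + n / γ) * exp (γ / n * |x|)) ^ n := by gcongr
      _ = (1 + n / γ) ^ n * exp (γ * |x|) := by
        rw [mul_pow, ← exp_nat_mul]; field_simp
  have hshift : exp (-γ * x) ≤ exp (2 * γ) * exp (-γ * |x|) := by
    rw [← exp_add, exp_le_exp]
    rcases le_total 0 x with h | h
    · rw [abs_of_nonneg h]; nlinarith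
    · rw [abs_of_nonpos h]; nlinarith
  rw [rpow_neg (sqrt_nonneg _), rpow_natCast, ← div_eq_mul_inv, le_div_iff₀ (by positivity)]
  calc exp (-γ * x) * √(1 + x ^ 2) ^ n
      ≤ exp (2 * γ) * exp (-γ * |x|) * ((1 + n / γ) ^ n * exp (γ * |x|)) := by gcongr
    _ = exp (2 * γ) * (1 + n / γ) ^ n := by
        rw [mul_mul_mul_comm, ← exp_add, neg_mul, neg_add_cancel, exp_zero, mul_one]

noncomputable def volterraWeight (γ x y : ℝ) : ℝ := (1 + |y - x|) * exp (-γ * |y|)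

section VolterraWeight

variable {γ : ℝ}

lemma volterraWeight_le_exp (hγ : 0 < γ) {x y : ℝ} (hxy : x ≤ y) :
    volterraWeight γ x y ≤ (1 + 2 / γ) * exp (-(γ / 2) * x) * exp (-(γ / 2) * y) := by
  have h := one_add_le_mul_exp (half_pos hγ) (sub_nonneg.mpr hxy)
  rw [inv_div] at h
  calc volterraWeight γ x y ≤ (1 + (y - x)) * exp (-γ * y) := by
        rw [volterraWeight, abs_of_nonneg (sub_nonneg.mpr hxy)]
        gcongr _ * ?_
        exact exp_le_exp.mpr (by nlinarith [le_abs_self y])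
    _ ≤ (1 + 2 / γ) * exp (γ / 2 * (y - x)) * exp (-γ * y) := by gcongr
    _ = _ := by rw [mul_assoc, mul_assoc, ← exp_add, ← exp_add]; ring_nf

lemma volterraWeight_le_one_add_abs (hγ : 0 < γ) (x y : ℝ) :
    volterraWeight γ x y ≤ (1 + 2 / γ) * (1 + |x|) * exp (-(γ / 2) * |y|) := by
  have h := one_add_le_mul_exp (half_pos hγ) (abs_nonneg y)
  rw [inv_div] at h
  calc volterraWeight γ x y ≤ (1 + |x|) * (1 + |y|) * exp (-γ * |y|) := by
        rw [volterraWeight]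
        gcongr
        nlinarith [abs_sub y x, mul_nonneg (abs_nonneg x) (abs_nonneg y)]
    _ ≤ (1 + |x|) * ((1 + 2 / γ) * exp (γ / 2 * |y|)) * exp (-γ * |y|) := by gcongr
    _ = _ := by rw [mul_assoc, mul_assoc, mul_assoc, ← exp_add]; ring_nf

lemma integrableOn_volterraWeight (hγ : 0 < γ) (x : ℝ) :
    IntegrableOn (volterraWeight γ x) (Ioi x) := by
  have hcont : Continuous (volterraWeight γ x) := by unfold volterraWeight; fun_prop
  refine Integrable.mono' ((exp_neg_integrableOn_Ioi x (half_pos hγ)).const_mul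
    ((1 + 2 / γ) * exp (-(γ / 2) * x))) hcont.aestronglyMeasurable.restrict ?_
  refine (ae_restrict_iff' measurableSet_Ioi).mpr (Filter.Eventually.of_forall fun y hy => ?_)
  rw [Real.norm_of_nonneg (by unfold volterraWeight; positivity)]
  exact volterraWeight_le_exp hγ (le_of_lt hy)

lemma setIntegral_volterraWeight_le_exp (hγ : 0 < γ) (x : ℝ) :
    ∫ y in Ioi x, volterraWeight γ x y ≤ 2 / γ * (1 + 2 / γ) * exp (-γ * x) := by
  calc ∫ y in Ioi x, volterraWeight γ x y
      ≤ ∫ y in Ioi x, (1 + 2 / γ) * exp (-(γ / 2) * x) * exp (-(γ / 2) * y) :=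
        setIntegral_mono_on (integrableOn_volterraWeight hγ x)
          ((exp_neg_integrableOn_Ioi x (half_pos hγ)).const_mul _) measurableSet_Ioi
          fun y hy => volterraWeight_le_exp hγ (le_of_lt hy)
    _ = 2 / γ * (1 + 2 / γ) * exp (-γ * x) := by
        rw [integral_const_mul, integral_exp_neg_mul_Ioi (half_pos hγ),
          show -γ * x = -(γ / 2) * x + -(γ / 2) * x by ring, exp_add]
        field_simp

lemma setIntegral_volterraWeight_le_one_add_abs (hγ : 0 < γ) (x : ℝ) :
    ∫ y in Ioi x, volterraWeight γ x y ≤ 4 / γ * (1 + 2 / γ) * (1 + |x|) := by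
  have hint := (integrable_exp_neg_mul_abs (half_pos hγ)).const_mul ((1 + 2 / γ) * (1 + |x|))
  calc ∫ y in Ioi x, volterraWeight γ x y
      ≤ ∫ y in Ioi x, (1 + 2 / γ) * (1 + |x|) * exp (-(γ / 2) * |y|) :=
        setIntegral_mono_on (integrableOn_volterraWeight hγ x) hint.integrableOn
          measurableSet_Ioi fun y _ => volterraWeight_le_one_add_abs hγ x y
    _ ≤ ∫ y, (1 + 2 / γ) * (1 + |x|) * exp (-(γ / 2) * |y|) :=
        setIntegral_le_integral hint (Filter.Eventually.of_forall fun y => by positivity)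
    _ = 4 / γ * (1 + 2 / γ) * (1 + |x|) := by
        rw [integral_const_mul, integral_exp_neg_mul_abs (half_pos hγ)]
        field_simp
        ring

lemma setIntegral_volterraWeight_le_rpow (hγ : 0 < γ) {n : ℕ} (hn : n ≠ 0) {x : ℝ}
    (hx : -1 ≤ x) :
    ∫ y in Ioi x, volterraWeight γ x y
      ≤ 2 / γ * (1 + 2 / γ) * (exp (2 * γ) * (1 + n / γ) ^ n) * √(1 + x ^ 2) ^ (-(n : ℝ)) := by
  rw [mul_assoc _ (_ * _)]
  exact (setIntegral_volterraWeight_le_exp hγ x).trans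
    (by gcongr; exact exp_neg_mul_le_mul_sqrt_one_add_sq_rpow hγ hn hx)

lemma setIntegral_volterraWeight_le_sqrt (hγ : 0 < γ) (x : ℝ) :
    ∫ y in Ioi x, volterraWeight γ x y ≤ 8 / γ * (1 + 2 / γ) * √(1 + x ^ 2) :=
  calc ∫ y in Ioi x, volterraWeight γ x y ≤ 4 / γ * (1 + 2 / γ) * (1 + |x|) :=
        setIntegral_volterraWeight_le_one_add_abs hγ x
    _ ≤ 4 / γ * (1 + 2 / γ) * (2 * √(1 + x ^ 2)) := by
        gcongr; exact one_add_abs_le_two_mul_sqrt_one_add_sq x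
    _ = 8 / γ * (1 + 2 / γ) * √(1 + x ^ 2) := by ring

lemma norm_sub_one_le_of_volterra {CV M k x : ℝ} {V : ℝ → ℝ} {u : ℝ → ℂ} (hγ : 0 < γ)
    (hV : ∀ y, |V y| ≤ CV * exp (-γ * |y|)) (hu : ∀ y, ‖u y‖ ≤ M)
    (hux : u x = 1 + ∫ y in Ioi x, volterraKernel k (y - x) * V y * u y) :
    ‖u x - 1‖ ≤ CV * M * (∫ y in Ioi x, volterraWeight γ x y) * (√(1 + k ^ 2))⁻¹ := by
  have hpt : ∀ y, ‖volterraKernel k (y - x) * V y * u y‖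
      ≤ CV * M / √(1 + k ^ 2) * volterraWeight γ x y := fun y =>
    calc ‖volterraKernel k (y - x) * V y * u y‖
        = ‖volterraKernel k (y - x)‖ * |V y| * ‖u y‖ := by
          rw [norm_mul, norm_mul, Complex.norm_real, Real.norm_eq_abs]
      _ ≤ (1 + |y - x|) / √(1 + k ^ 2) * (CV * exp (-γ * |y|)) * M := by
          have hmajorant_nonneg := (abs_nonneg _).trans (hV y)
          gcongr
          exacts [norm_volterraKernel_le k (y - x), hV y, hu y]
      _ = CV * M / √(1 + k ^ 2) * volterraWeight γ x y := by
          rw [volterraWeight]; ring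
  rw [hux, add_sub_cancel_left, mul_right_comm, ← div_eq_mul_inv, ← integral_const_mul]
  exact norm_integral_le_of_norm_le ((integrableOn_volterraWeight hγ x).const_mul _)
    (Filter.Eventually.of_forall hpt)

end VolterraWeight

theorem stmt6_general (γ CV : ℝ) (hγ : 0 < γ) (hCV : 0 ≤ CV)
    (V : ℝ → ℝ)
    (hVb : ∀ x : ℝ, |V x| ≤ CV * Real.exp (-γ * |x|))
    (m : ℝ → ℝ → ℂ)
    (hm_bdd : ∃ M : ℝ, ∀ x k : ℝ, k ≠ 0 → ‖m x k‖ ≤ M)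
    (hVolterra : ∀ x : ℝ, ∀ k : ℝ, k ≠ 0 →
      m x k = 1 + ∫ y in Set.Ioi x,
        ((Complex.exp (2 * Complex.I * k * (y - x)) - 1) / (2 * Complex.I * k))
          * V y * m y k) :
    ∃ C : ℝ, 0 ≤ C ∧
      (∀ x : ℝ, -1 ≤ x → ∀ k : ℝ, k ≠ 0 →
        ‖m x k - 1‖ ≤ C * Real.sqrt (1 + x ^ 2) ^ (-(12 : ℝ)) * (Real.sqrt (1 + k ^ 2))⁻¹) ∧
      (∀ x : ℝ, x ≤ 1 → ∀ k : ℝ, k ≠ 0 →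
        ‖m x k - 1‖ ≤ C * Real.sqrt (1 + x ^ 2) * (Real.sqrt (1 + k ^ 2))⁻¹) := by
  obtain ⟨M, hM⟩ := hm_bdd
  have hM0 : 0 ≤ M := (norm_nonneg _).trans (hM 0 1 one_ne_zero)
  have hm : ∀ x k, k ≠ 0 →
      ‖m x k - 1‖ ≤ CV * M * (∫ y in Ioi x, volterraWeight γ x y) * (√(1 + k ^ 2))⁻¹ :=
    fun x k hk => norm_sub_one_le_of_volterra hγ hVb (fun y => hM y k hk)
      (by simpa only [volterraKernel, Complex.ofReal_sub] using hVolterra x k hk)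
  set A := 2 / γ * (1 + 2 / γ) * (exp (2 * γ) * (1 + 12 / γ) ^ 12)
  set B := 8 / γ * (1 + 2 / γ)
  have hA : 0 ≤ A := by positivity
  have hB : 0 ≤ B := by positivity
  refine ⟨CV * M * (A + B), by positivity, fun x hx k hk => ?_, fun x hx k hk => ?_⟩
  · have hI := setIntegral_volterraWeight_le_rpow hγ (n := 12) (by norm_num) hx
    push_cast at hI
    refine (hm x k hk).trans ?_
    rw [mul_assoc (CV * M) (A + B)]
    gcongr
    exact hI.trans (by gcongr; linarith)
  · refine (hm x k hk).trans ?_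
    rw [mul_assoc (CV * M) (A + B)]
    gcongr
    exact (setIntegral_volterraWeight_le_sqrt hγ x).trans (by gcongr; linarith)

/-- Bounds on the modified Jost function: if `V` is continuous with
`|V(x)| ≤ C_V e^{−γ|x|}` and the bounded function `m(x,k)` solves the Volterra
equation `m(x,k) = 1 + ∫_x^∞ D_k(y−x) V(y) m(y,k) dy`, `D_k(y) = (e^{2iky}−1)/(2ik)`,
then `|m(x,k) − 1| ≤ C ⟨x⟩⁻¹² ⟨k⟩⁻¹` for `x ≥ −1` and
`|m(x,k) − 1| ≤ C ⟨x⟩ ⟨k⟩⁻¹` for `x ≤ 1` (all `k ≠ 0`). -/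
theorem stmt6 (γ CV : ℝ) (hγ : 0 < γ) (hCV : 0 ≤ CV)
    (V : ℝ → ℝ) (hVc : Continuous V)
    (hVb : ∀ x : ℝ, |V x| ≤ CV * Real.exp (-γ * |x|))
    (m : ℝ → ℝ → ℂ)
    (hm_bdd : ∃ M : ℝ, ∀ x k : ℝ, k ≠ 0 → ‖m x k‖ ≤ M)
    (hVolterra : ∀ x : ℝ, ∀ k : ℝ, k ≠ 0 →
      m x k = 1 + ∫ y in Set.Ioi x,
        ((Complex.exp (2 * Complex.I * k * (y - x)) - 1) / (2 * Complex.I * k))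
          * V y * m y k) :
    ∃ C : ℝ, 0 ≤ C ∧
      (∀ x : ℝ, -1 ≤ x → ∀ k : ℝ, k ≠ 0 →
        ‖m x k - 1‖ ≤ C * Real.sqrt (1 + x ^ 2) ^ (-(12 : ℝ)) * (Real.sqrt (1 + k ^ 2))⁻¹) ∧
      (∀ x : ℝ, x ≤ 1 → ∀ k : ℝ, k ≠ 0 →
        ‖m x k - 1‖ ≤ C * Real.sqrt (1 + x ^ 2) * (Real.sqrt (1 + k ^ 2))⁻¹) :=
  stmt6_general γ CV hγ hCV V hVb m hm_bdd hVolterra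
end

section
/- Fix s ∈ ℝ and signs ε₁, ε₂, ε₃, ε₄ ∈ {+1, −1}. Let f₁, f₂, f₃, f₄, b : ℝ → ℂ be Schwartz functions, and define 𝒯_b(f₁,f₂,f₃,f₄)(k) = ∫_{ℝ⁴} e^{isΦ(k,l,m,n,p)} (⟨l⟩⟨m⟩⟨n⟩⟨p⟩)^{−1} f₁(l) f₂(m) f₃(n) f₄(p) b(k − ε₁l − ε₂m − ε₃n − ε₄p) dl dm dn dp, where Φ(k,l,m,n,p) = ⟨k⟩ − ⟨l⟩ − ⟨m⟩ − ⟨n⟩ − ⟨p⟩. Then for every x ∈ ℝ, ∫_ℝ e^{ikx} e^{−is⟨k⟩} 𝒯_b(f₁,f₂,f₃,f₄)(k) dk = ( ∫_ℝ e^{iqx} b(q) dq ) · ∏_{j=1}^{4} ( ∫_ℝ e^{i ε_j l x} ⟨l⟩^{−1} e^{−is⟨l⟩} f_j(l) dl ). Up to Fourier normalization constants, this says the inverse Fourier transform of e^{−is⟨k⟩} 𝒯_b(f₁,…,f₄) equals 𝓕^{−1}[b](x) · ∏_j u_j(s, ε_j x), where u_j(s,·) = ⟨D⟩^{−1} e^{−is⟨D⟩}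 𝓕^{−1} f_j. -/
open MeasureTheory

/-- Japanese bracket `⟨x⟩ = √(1+x²)`. -/
noncomputable def jb (x : ℝ) : ℝ := Real.sqrt (1 + x ^ 2)

/-- The phase `Φ(k,l,m,n,p) = ⟨k⟩ − ⟨l⟩ − ⟨m⟩ − ⟨n⟩ − ⟨p⟩`. -/
noncomputable def Phi (k l m n p : ℝ) : ℝ := jb k - jb l - jb m - jb n - jb p

/-- The multilinear form `𝒯_b(f₁,f₂,f₃,f₄)(k)` arising from the singular part of
the quartic nonlinear spectral distribution. -/
noncomputable def Tform (s ε₁ ε₂ ε₃ ε₄ : ℝ) (b f₁ f₂ f₃ f₄ : ℝ → ℂ) (k : ℝ) : ℂ :=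
  ∫ l : ℝ, ∫ m : ℝ, ∫ n : ℝ, ∫ p : ℝ,
    Complex.exp (Complex.I * s * Phi k l m n p) *
      (((jb l * jb m * jb n * jb p : ℝ)⁻¹ : ℝ) : ℂ) *
      f₁ l * f₂ m * f₃ n * f₄ p *
      b (k - ε₁ * l - ε₂ * m - ε₃ * n - ε₄ * p)

/-!
Multiplying by `e^{ikx} e^{-is⟨k⟩}` splits the phase of `𝒯_b` variable by variable:
`e^{ikx} = ∏ⱼ e^{iεⱼlⱼx} · e^{i(k - Σ εⱼlⱼ)x}` and `e^{-is⟨k⟩} e^{isΦ} = ∏ⱼ e^{-is⟨lⱼ⟩}`.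
Hence the integrand in `k` is an iterated convolution of `q ↦ e^{iqx} b(q)` with the
pushforwards of the measures `Gⱼ(l) dl` under `l ↦ εⱼ l`, where `Gⱼ` is the integrand of the
`j`-th factor on the right. The integral of such a convolution is the product of the total
masses, by Fubini and the invariance of the product measure under the shear
`(t, y) ↦ (t, y - φ t)`.
-/

section MapConv

variable {α G 𝕜 : Type*} [MeasurableSpace α] [AddGroup G] [MeasurableSpace G] [MeasurableAdd G]
  [MeasurableSub₂ G] [RCLike 𝕜] {μ : Measure α} {ν : Measure G} [SFinite μ] [SFinite ν]
  [ν.IsAddRightInvariant] {φ : α → G}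

/-- The convolution of `f` with the pushforward of the measure `g • μ` under `φ`. -/
noncomputable def mapConv (μ : Measure α) (φ : α → G) (g : α → 𝕜) (f : G → 𝕜) (y : G) : 𝕜 :=
  ∫ t, g t * f (y - φ t) ∂μ

theorem measurePreserving_shear (hφ : Measurable φ) :
    MeasurePreserving (fun p : α × G => (p.1, p.2 - φ p.1)) (μ.prod ν) (μ.prod ν) :=
  MeasurePreserving.id μ |>.skew_product (measurable_snd.sub (hφ.comp measurable_fst))
    (.of_forall fun t => (measurePreserving_sub_right ν (φ t)).map_eq)

theorem integrable_mul_comp_sub_prod {g : α → 𝕜} {f : G → 𝕜} (hφ : Measurable φ)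
    (hg : Integrable g μ) (hf : Integrable f ν) :
    Integrable (fun p : α × G => g p.1 * f (p.2 - φ p.1)) (μ.prod ν) :=
  ((measurePreserving_shear hφ).integrable_comp (hg.mul_prod hf).aestronglyMeasurable).2
    (hg.mul_prod hf)

theorem integrable_mapConv {g : α → 𝕜} {f : G → 𝕜} (hφ : Measurable φ)
    (hg : Integrable g μ) (hf : Integrable f ν) : Integrable (mapConv μ φ g f) ν :=
  (integrable_mul_comp_sub_prod hφ hg hf).integral_prod_right

theorem integral_mapConv {g : α → 𝕜} {f : G → 𝕜} (hφ : Measurable φ)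
    (hg : Integrable g μ) (hf : Integrable f ν) :
    ∫ y, mapConv μ φ g f y ∂ν = (∫ t, g t ∂μ) * ∫ y, f y ∂ν := by
  have hshear := measurePreserving_shear (μ := μ) (ν := ν) hφ
  rw [← integral_prod_mul, ← hshear.map_eq, integral_map hshear.measurable.aemeasurable,
    integral_prod_symm _ (integrable_mul_comp_sub_prod hφ hg hf)]
  · rfl
  · rw [hshear.map_eq]; exact (hg.mul_prod hf).aestronglyMeasurable

end MapConv

open Complex

theorem one_le_jb (t : ℝ) : 1 ≤ jb t :=
  Real.one_le_sqrt.2 (by nlinarith)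

@[fun_prop]
theorem continuous_jb : Continuous jb := by
  unfold jb; fun_prop

noncomputable def kgIntegrand (s ε x : ℝ) (f : ℝ → ℂ) (t : ℝ) : ℂ :=
  cexp (I * ε * t * x) * ((jb t)⁻¹ : ℝ) * cexp (-(I * s * jb t)) * f t

theorem integrable_kgIntegrand (s ε x : ℝ) {f : ℝ → ℂ} (hf : Integrable f) :
    Integrable (kgIntegrand s ε x f) := by
  refine hf.bdd_mul (c := 1) ?_ (.of_forall fun t => ?_)
  · have hjb (t : ℝ) : jb t ≠ 0 := (zero_lt_one.trans_le (one_le_jb t)).ne'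
    fun_prop (disch := exact hjb _)
  · have h := one_le_jb t
    simp [norm_exp, abs_of_pos (zero_lt_one.trans_le h), inv_le_one_of_one_le₀ h]

theorem integrable_cexp_mul (x : ℝ) {f : ℝ → ℂ} (hf : Integrable f) :
    Integrable (fun q : ℝ => cexp (I * q * x) * f q) :=
  hf.bdd_mul (c := 1) (by fun_prop) (.of_forall fun q => by simp [norm_exp])

theorem cexp_mul_cexp_mul_Tform (s ε₁ ε₂ ε₃ ε₄ x k : ℝ) (b f₁ f₂ f₃ f₄ : ℝ → ℂ) :
    cexp (I * k * x) * cexp (-(I * s * jb k)) * Tform s ε₁ ε₂ ε₃ ε₄ b f₁ f₂ f₃ f₄ k =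
      mapConv volume (ε₁ * ·) (kgIntegrand s ε₁ x f₁)
        (mapConv volume (ε₂ * ·) (kgIntegrand s ε₂ x f₂)
          (mapConv volume (ε₃ * ·) (kgIntegrand s ε₃ x f₃)
            (mapConv volume (ε₄ * ·) (kgIntegrand s ε₄ x f₄)
              fun q => cexp (I * q * x) * b q))) k := by
  simp only [Tform, mapConv, ← integral_const_mul]
  refine integral_congr_ae (.of_forall fun l => ?_)
  refine integral_congr_ae (.of_forall fun m => ?_)
  refine integral_congr_ae (.of_forall fun n => ?_)
  refine integral_congr_ae (.of_forall fun p => ?_)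
  have hexp : cexp (I * k * x) * cexp (-(I * s * jb k)) * cexp (I * s * Phi k l m n p) =
      cexp (I * ε₁ * l * x) * cexp (-(I * s * jb l)) * cexp (I * ε₂ * m * x) *
        cexp (-(I * s * jb m)) * cexp (I * ε₃ * n * x) * cexp (-(I * s * jb n)) *
        cexp (I * ε₄ * p * x) * cexp (-(I * s * jb p)) *
        cexp (I * ↑(k - ε₁ * l - ε₂ * m - ε₃ * n - ε₄ * p) * x) := by
    simp only [← exp_add, Phi]
    congr 1
    push_cast
    ring
  have hinv : (((jb l * jb m * jb n * jb p)⁻¹ : ℝ) : ℂ) =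
      ((jb l)⁻¹ : ℝ) * ((jb m)⁻¹ : ℝ) * ((jb n)⁻¹ : ℝ) * ((jb p)⁻¹ : ℝ) := by
    push_cast; ring
  simp only [kgIntegrand, hinv]
  linear_combination ((jb l)⁻¹ : ℝ) * ((jb m)⁻¹ : ℝ) * ((jb n)⁻¹ : ℝ) * ((jb p)⁻¹ : ℝ) *
    f₁ l * f₂ m * f₃ n * f₄ p * b (k - ε₁ * l - ε₂ * m - ε₃ * n - ε₄ * p) * hexp

theorem stmt14_general (s ε₁ ε₂ ε₃ ε₄ : ℝ)
    (f₁ f₂ f₃ f₄ b : SchwartzMap ℝ ℂ) :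
    ∀ x : ℝ,
      (∫ k : ℝ, Complex.exp (Complex.I * k * x) *
          Complex.exp (-(Complex.I * s * jb k)) *
          Tform s ε₁ ε₂ ε₃ ε₄ ⇑b ⇑f₁ ⇑f₂ ⇑f₃ ⇑f₄ k)
        = (∫ q : ℝ, Complex.exp (Complex.I * q * x) * b q) *
          (∫ l : ℝ, Complex.exp (Complex.I * ε₁ * l * x) * (((jb l)⁻¹ : ℝ) : ℂ) *
              Complex.exp (-(Complex.I * s * jb l)) * f₁ l) *
          (∫ m : ℝ, Complex.exp (Complex.I * ε₂ * m * x) * (((jb m)⁻¹ : ℝ) : ℂ) *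
              Complex.exp (-(Complex.I * s * jb m)) * f₂ m) *
          (∫ n : ℝ, Complex.exp (Complex.I * ε₃ * n * x) * (((jb n)⁻¹ : ℝ) : ℂ) *
              Complex.exp (-(Complex.I * s * jb n)) * f₃ n) *
          (∫ p : ℝ, Complex.exp (Complex.I * ε₄ * p * x) * (((jb p)⁻¹ : ℝ) : ℂ) *
              Complex.exp (-(Complex.I * s * jb p)) * f₄ p) := by
  intro x
  have hφ (ε : ℝ) : Measurable (ε * · : ℝ → ℝ) := measurable_const_mul ε
  have hG (ε : ℝ) (f : SchwartzMap ℝ ℂ) := integrable_kgIntegrand s ε x f.integrable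
  have hB := integrable_cexp_mul x b.integrable
  have hC₄ := integrable_mapConv (hφ ε₄) (hG ε₄ f₄) hB
  have hC₃ := integrable_mapConv (hφ ε₃) (hG ε₃ f₃) hC₄
  have hC₂ := integrable_mapConv (hφ ε₂) (hG ε₂ f₂) hC₃
  simp_rw [cexp_mul_cexp_mul_Tform]
  rw [integral_mapConv (hφ ε₁) (hG ε₁ f₁) hC₂, integral_mapConv (hφ ε₂) (hG ε₂ f₂) hC₃,
    integral_mapConv (hφ ε₃) (hG ε₃ f₃) hC₄, integral_mapConv (hφ ε₄) (hG ε₄ f₄) hB]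
  simp only [kgIntegrand]
  ring

/-- Factorization of the inverse Fourier transform of `e^{−is⟨k⟩} 𝒯_b(f₁,…,f₄)`:
it equals `𝓕⁻¹[b](x) · ∏_j u_j(s, ε_j x)` with
`u_j(s,·) = ⟨D⟩⁻¹ e^{−is⟨D⟩} 𝓕⁻¹ f_j` (up to Fourier normalization constants). -/
theorem stmt14 (s ε₁ ε₂ ε₃ ε₄ : ℝ)
    (hε₁ : ε₁ = 1 ∨ ε₁ = -1) (hε₂ : ε₂ = 1 ∨ ε₂ = -1)
    (hε₃ : ε₃ = 1 ∨ ε₃ = -1) (hε₄ : ε₄ = 1 ∨ ε₄ = -1)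
    (f₁ f₂ f₃ f₄ b : SchwartzMap ℝ ℂ) :
    ∀ x : ℝ,
      (∫ k : ℝ, Complex.exp (Complex.I * k * x) *
          Complex.exp (-(Complex.I * s * jb k)) *
          Tform s ε₁ ε₂ ε₃ ε₄ ⇑b ⇑f₁ ⇑f₂ ⇑f₃ ⇑f₄ k)
        = (∫ q : ℝ, Complex.exp (Complex.I * q * x) * b q) *
          (∫ l : ℝ, Complex.exp (Complex.I * ε₁ * l * x) * (((jb l)⁻¹ : ℝ) : ℂ) *
              Complex.exp (-(Complex.I * s * jb l)) * f₁ l) *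
          (∫ m : ℝ, Complex.exp (Complex.I * ε₂ * m * x) * (((jb m)⁻¹ : ℝ) : ℂ) *
              Complex.exp (-(Complex.I * s * jb m)) * f₂ m) *
          (∫ n : ℝ, Complex.exp (Complex.I * ε₃ * n * x) * (((jb n)⁻¹ : ℝ) : ℂ) *
              Complex.exp (-(Complex.I * s * jb n)) * f₃ n) *
          (∫ p : ℝ, Complex.exp (Complex.I * ε₄ * p * x) * (((jb p)⁻¹ : ℝ) : ℂ) *
              Complex.exp (-(Complex.I * s * jb p)) * f₄ p) :=
  stmt14_general s ε₁ ε₂ ε₃ ε₄ f₁ f₂ f₃ f₄ b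
end
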